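/- There exists C > 0 such that, uniformly in dyadic N, N₁, N₂, N₃ ≥ 1 and m ∈ ℤ, the operator norm of the base tensor h^{𝐍,(m)} viewed as a linear map from ℓ²((ℤ²)²) (variables (n₂, n₃)) to ℓ²((ℤ²)²) (variables (n, n₁)), i.e. the map sending f to (n, n₁) ↦ ∑_{n₂,n₃} h^{𝐍,(m)}(n, n₁, n₂, n₃) f(n₂, n₃), is at most C · (min(N, N₁))^{1/2} · (min(N₂, N₃))^{1/2}. -/
import Mathlib


/-- Euclidean norm of a lattice point in `ℤ²`. -/
noncomputable def znorm (n : ℤ × ℤ) : ℝ := Real.sqrt ((n.1 : ℝ) ^ 2 + (n.2 : ℝ) ^ 2)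

/-- Squared Euclidean norm `|n|²` of `n ∈ ℤ²`, as an integer. -/
def nsq (n : ℤ × ℤ) : ℤ := n.1 ^ 2 + n.2 ^ 2

/-- `φ(n̄) = |n|² − |n₁|² + |n₂|² − |n₃|²`. -/
def phiFn (n n₁ n₂ n₃ : ℤ × ℤ) : ℤ := nsq n - nsq n₁ + nsq n₂ - nsq n₃

/-- `N` is a dyadic number: `N = 2^k` for some integer `k ≥ 0`. -/
def IsDyadic (N : ℝ) : Prop := ∃ k : ℕ, N = 2 ^ k

/-- `|n| ∼ N`: for dyadic `N ≥ 2` this means `N/2 < |n| ≤ N`; for `N = 1` it means `|n| ≤ 1`. -/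
def simDyadic (N : ℝ) (n : ℤ × ℤ) : Prop :=
  (N = 1 ∧ znorm n ≤ 1) ∨ (N ≠ 1 ∧ N / 2 < znorm n ∧ znorm n ≤ N)

/-- Membership in the set `S^{𝐍,(m)}`. -/
def SMem (N N₁ N₂ N₃ : ℝ) (m : ℤ) (n n₁ n₂ n₃ : ℤ × ℤ) : Prop :=
  n = n₁ - n₂ + n₃ ∧ n ≠ n₁ ∧ n ≠ n₃ ∧ phiFn n n₁ n₂ n₃ = m ∧
    simDyadic N n ∧ simDyadic N₁ n₁ ∧ simDyadic N₂ n₂ ∧ simDyadic N₃ n₃ 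

-- The base tensor `h^{𝐍,(m)}`: the `{0,1}`-valued indicator of `S^{𝐍,(m)}`.
open Classical in
noncomputable def hten (N N₁ N₂ N₃ : ℝ) (m : ℤ) (n n₁ n₂ n₃ : ℤ × ℤ) : ℝ :=
  if SMem N N₁ N₂ N₃ m n n₁ n₂ n₃ then 1 else 0


open scoped ENNReal

lemma znorm_sq_le {R : ℝ} (hR : 0 ≤ R) {v : ℤ × ℤ} (h : znorm v ≤ R) :
    ((v.1 : ℝ)) ^ 2 + (v.2 : ℝ) ^ 2 ≤ R ^ 2 := by
  have h0 : (0:ℝ) ≤ (v.1:ℝ)^2 + (v.2:ℝ)^2 := by positivity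
  have h1 := Real.sq_sqrt h0
  have h2 := Real.sqrt_nonneg ((v.1:ℝ)^2 + (v.2:ℝ)^2)
  unfold znorm at h
  nlinarith


lemma line_count (a : ℤ × ℤ) (ha : a ≠ 0) (c : ℤ) (R : ℝ) (hR : 1 ≤ R) :
    {v : ℤ × ℤ | a.1 * v.1 + a.2 * v.2 = c ∧ znorm v ≤ R}.Finite ∧
      (({v : ℤ × ℤ | a.1 * v.1 + a.2 * v.2 = c ∧ znorm v ≤ R}).ncard : ℝ) ≤ 7 * R := by
  set S := {v : ℤ × ℤ | a.1 * v.1 + a.2 * v.2 = c ∧ znorm v ≤ R} with hS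
  have hR0 : (0:ℝ) ≤ R := by linarith
  have haa : (0:ℝ) < (a.1:ℝ)^2 + (a.2:ℝ)^2 := by
    rcases (by simpa [Prod.ext_iff] using ha : ¬(a.1 = 0 ∧ a.2 = 0)) with h
    have : a.1 ≠ 0 ∨ a.2 ≠ 0 := by tauto
    rcases this with h' | h'
    · have : (0:ℝ) < (a.1:ℝ)^2 := by positivity
      nlinarith [sq_nonneg (a.2:ℝ)]
    · have : (0:ℝ) < (a.2:ℝ)^2 := by positivity
      nlinarith [sq_nonneg (a.1:ℝ)]
  set D : ℝ := Real.sqrt ((a.1:ℝ)^2 + (a.2:ℝ)^2) with hD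
  have hDpos : 0 < D := Real.sqrt_pos.2 haa
  have hD2 : D ^ 2 = (a.1:ℝ)^2 + (a.2:ℝ)^2 := Real.sq_sqrt haa.le
  set φ : ℤ × ℤ → ℤ := fun v => a.1 * v.2 - a.2 * v.1 with hφ
  set F : ℤ × ℤ → ℤ := fun v => ⌊(φ v : ℝ) / D⌋ with hF
  -- injectivity
  have hinj : Set.InjOn F S := by
    intro v hv w hw hvw
    by_contra hne
    have hu0 : v - w ≠ 0 := sub_ne_zero.2 hne
    have hu1 : ((v.1 - w.1)^2 + (v.2 - w.2)^2 : ℤ) ≥ 1 := by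
      rcases (by simpa [Prod.ext_iff, sub_eq_zero] using hu0 : ¬(v.1 = w.1 ∧ v.2 = w.2)) with h
      have h' : v.1 - w.1 ≠ 0 ∨ v.2 - w.2 ≠ 0 := by
        by_contra hc
        push_neg at hc
        exact h ⟨by linarith [hc.1], by linarith [hc.2]⟩
      rcases h' with h' | h'
      · have := Int.one_le_abs h'
        nlinarith [sq_nonneg (v.2 - w.2), sq_abs (v.1 - w.1)]
      · have := Int.one_le_abs h'
        nlinarith [sq_nonneg (v.1 - w.1), sq_abs (v.2 - w.2)]
    have hline : a.1 * (v.1 - w.1) + a.2 * (v.2 - w.2) = 0 := by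
      have h1 := hv.1; have h2 := hw.1
      linear_combination h1 - h2
    -- Lagrange identity with the line condition
    have hLag : (φ v - φ w)^2 = (a.1^2 + a.2^2) * ((v.1 - w.1)^2 + (v.2 - w.2)^2) := by
      have : (φ v - φ w)^2 + (a.1 * (v.1 - w.1) + a.2 * (v.2 - w.2))^2
          = (a.1^2 + a.2^2) * ((v.1 - w.1)^2 + (v.2 - w.2)^2) := by
        simp only [hφ]; ring
      rw [hline] at this; linarith [this]
    have hge : ((φ v : ℝ) - (φ w : ℝ))^2 ≥ D^2 := by
      rw [hD2]
      have : ((φ v - φ w : ℤ) : ℝ)^2 = ((a.1:ℝ)^2 + (a.2:ℝ)^2) * (((v.1 - w.1 : ℤ):ℝ)^2 + ((v.2 - w.2 : ℤ):ℝ)^2) := by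
        exact_mod_cast congrArg (fun z : ℤ => (z : ℝ)) hLag
      push_cast at this ⊢
      nlinarith [haa, (by exact_mod_cast hu1 : ((v.1:ℝ) - w.1)^2 + ((v.2:ℝ) - w.2)^2 ≥ 1)]
    -- floors equal gives difference < D
    have hlt : |(φ v : ℝ) - (φ w : ℝ)| < D := by
      have h1 : (φ v : ℝ)/D < F v + 1 := by
        have := Int.lt_floor_add_one ((φ v : ℝ)/D); exact_mod_cast this
      have h2 : (F v : ℝ) ≤ (φ v : ℝ)/D := Int.floor_le _
      have h3 : (φ w : ℝ)/D < F w + 1 := by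
        have := Int.lt_floor_add_one ((φ w : ℝ)/D); exact_mod_cast this
      have h4 : (F w : ℝ) ≤ (φ w : ℝ)/D := Int.floor_le _
      rw [hvw] at h1 h2
      have e1 : D * ((φ v : ℝ)/D) = (φ v : ℝ) := by field_simp
      have e2 : D * ((φ w : ℝ)/D) = (φ w : ℝ) := by field_simp
      rw [abs_lt]
      constructor
      · have k : (φ w : ℝ)/D - (φ v : ℝ)/D < 1 := by linarith
        nlinarith [mul_lt_mul_of_pos_left k hDpos]
      · have k : (φ v : ℝ)/D - (φ w : ℝ)/D < 1 := by linarith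
        nlinarith [mul_lt_mul_of_pos_left k hDpos]
    nlinarith [sq_abs ((φ v : ℝ) - (φ w : ℝ)), abs_nonneg ((φ v : ℝ) - (φ w : ℝ)), hDpos]
  -- range bound
  have hmem : ∀ v ∈ S, F v ∈ Finset.Icc (-(⌈R⌉+1)) ⌈R⌉ := by
    intro v hv
    have hb : ((φ v : ℝ))^2 ≤ D^2 * R^2 := by
      have hL : ((φ v : ℝ))^2 + ((a.1:ℝ) * v.1 + (a.2:ℝ) * v.2)^2
          = ((a.1:ℝ)^2 + (a.2:ℝ)^2) * ((v.1:ℝ)^2 + (v.2:ℝ)^2) := by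
        simp only [hφ]; push_cast; ring
      have hv2 := znorm_sq_le hR0 hv.2
      rw [hD2]
      nlinarith [sq_nonneg ((a.1:ℝ) * v.1 + (a.2:ℝ) * v.2), haa.le, sq_nonneg ((v.1:ℝ)^2 + (v.2:ℝ)^2 - R^2)]
    have habs : |(φ v : ℝ)| ≤ D * R := by
      rw [← Real.sqrt_sq (abs_nonneg _)]
      rw [show (|(φ v : ℝ)|)^2 = ((φ v : ℝ))^2 from sq_abs _]
      calc Real.sqrt (((φ v : ℝ))^2) ≤ Real.sqrt (D^2 * R^2) := Real.sqrt_le_sqrt hb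
        _ = D * R := by
            rw [show D^2*R^2 = (D*R)^2 by ring, Real.sqrt_sq (by positivity)]
    have hdiv : -R ≤ (φ v : ℝ)/D ∧ (φ v : ℝ)/D ≤ R := by
      rw [abs_le] at habs
      constructor
      · rw [le_div_iff₀ hDpos]; nlinarith [habs.1]
      · rw [div_le_iff₀ hDpos]; nlinarith [habs.2]
    simp only [Finset.mem_Icc]
    constructor
    · have h1 : ((F v : ℤ) : ℝ) > (φ v : ℝ)/D - 1 := by
        have := Int.sub_one_lt_floor ((φ v : ℝ)/D); exact_mod_cast this
      have h2 : ((-(⌈R⌉+1) : ℤ) : ℝ) ≤ (φ v : ℝ)/D - 1 := by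
        push_cast
        have := Int.le_ceil R
        linarith [hdiv.1]
      have : ((-(⌈R⌉+1) : ℤ) : ℝ) < ((F v : ℤ) : ℝ) := lt_of_le_of_lt h2 h1
      exact_mod_cast this.le
    · have h1 : ((F v : ℤ) : ℝ) ≤ R := le_trans (Int.floor_le _) hdiv.2
      have h2 : R ≤ ((⌈R⌉ : ℤ) : ℝ) := Int.le_ceil R
      exact_mod_cast le_trans h1 h2
  have himg : F '' S ⊆ ↑(Finset.Icc (-(⌈R⌉+1)) ⌈R⌉) := by
    rintro z ⟨v, hv, rfl⟩; exact hmem v hv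
  have hfin : S.Finite := Set.Finite.of_finite_image
    (Set.Finite.subset (Finset.finite_toSet _) himg) hinj
  refine ⟨hfin, ?_⟩
  have h1 : S.ncard = (F '' S).ncard := (Set.ncard_image_of_injOn hinj).symm
  have h2 : (F '' S).ncard ≤ (Finset.Icc (-(⌈R⌉+1)) ⌈R⌉).card := by
    have := Set.ncard_le_ncard himg (Finset.finite_toSet _)
    rwa [Set.ncard_coe_finset] at this
  have hceil : (⌈R⌉ : ℝ) ≤ R + 1 := by linarith [(Int.ceil_lt_add_one R).le]
  have hceil1 : (1:ℤ) ≤ ⌈R⌉ := by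
    have := Int.ceil_pos.mpr (show (0:ℝ) < R by linarith)
    omega
  have h3 : ((Finset.Icc (-(⌈R⌉+1)) ⌈R⌉).card : ℝ) ≤ 7 * R := by
    rw [Int.card_Icc]
    have hnn : (0:ℤ) ≤ ⌈R⌉ + 1 - (-(⌈R⌉+1)) := by linarith
    have hcast : (((⌈R⌉ + 1 - (-(⌈R⌉+1))).toNat : ℕ) : ℝ) = ((⌈R⌉ + 1 - (-(⌈R⌉+1)) : ℤ) : ℝ) := by
      exact_mod_cast Int.toNat_of_nonneg hnn
    rw [hcast]
    push_cast
    linarith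
  calc (S.ncard : ℝ) = ((F '' S).ncard : ℝ) := by rw [h1]
    _ ≤ ((Finset.Icc (-(⌈R⌉+1)) ⌈R⌉).card : ℝ) := by exact_mod_cast h2
    _ ≤ 7 * R := h3

lemma simDyadic_le {N : ℝ} {n : ℤ × ℤ} (h : simDyadic N n) : znorm n ≤ N := by
  rcases h with ⟨h1, h2⟩ | ⟨_, _, h2⟩
  · rw [h1]; exact h2
  · exact h2

lemma dyadic_one_le {N : ℝ} (h : IsDyadic N) : 1 ≤ N := by
  obtain ⟨k, rfl⟩ := h
  exact one_le_pow₀ (by norm_num)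

lemma pair_line_count (d : ℤ × ℤ) (hd : d ≠ 0) (c : ℤ) (R₁ R₂ : ℝ) (h₁ : 1 ≤ R₁) (h₂ : 1 ≤ R₂)
    (S : Set ((ℤ × ℤ) × (ℤ × ℤ)))
    (hS : ∀ q ∈ S, q.2 = q.1 + d ∧ 2*d.1*q.1.1 + 2*d.2*q.1.2 = c ∧ znorm q.1 ≤ R₁ ∧ znorm q.2 ≤ R₂) :
    S.Finite ∧ (S.ncard : ℝ) ≤ 7 * min R₁ R₂ := by
  have hd2 : ((2*d.1, 2*d.2) : ℤ × ℤ) ≠ 0 := by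
    intro h
    apply hd
    have h1 : 2 * d.1 = 0 := congrArg Prod.fst h
    have h2 : 2 * d.2 = 0 := congrArg Prod.snd h
    apply Prod.ext <;> simp only [Prod.fst_zero, Prod.snd_zero] <;> omega
  obtain ⟨fin1, card1⟩ := line_count (2*d.1, 2*d.2) hd2 c R₁ h₁
  obtain ⟨fin2, card2⟩ := line_count (2*d.1, 2*d.2) hd2 (c + 2*(d.1^2+d.2^2)) R₂ h₂
  have hinj1 : Set.InjOn Prod.fst S := by
    intro q hq r hr h
    have e1 := (hS q hq).1; have e2 := (hS r hr).1
    have : q.2 = r.2 := by rw [e1, e2, h]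
    exact Prod.ext h this
  have hinj2 : Set.InjOn Prod.snd S := by
    intro q hq r hr h
    have e1 := (hS q hq).1; have e2 := (hS r hr).1
    have : q.1 = r.1 := by
      have := e1.symm.trans (h ▸ e2)
      exact add_right_cancel this
    exact Prod.ext this h
  have himg1 : Prod.fst '' S ⊆ {v : ℤ × ℤ | (2*d.1, 2*d.2).1 * v.1 + (2*d.1, 2*d.2).2 * v.2 = c ∧ znorm v ≤ R₁} := by
    rintro v ⟨q, hq, rfl⟩
    exact ⟨(hS q hq).2.1, (hS q hq).2.2.1⟩
  have himg2 : Prod.snd '' S ⊆ {v : ℤ × ℤ | (2*d.1, 2*d.2).1 * v.1 + (2*d.1, 2*d.2).2 * v.2 = c + 2*(d.1^2+d.2^2) ∧ znorm v ≤ R₂} := by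
    rintro v ⟨q, hq, rfl⟩
    obtain ⟨heq, hline, _, hz2⟩ := hS q hq
    refine ⟨?_, hz2⟩
    have f1 : q.2.1 = q.1.1 + d.1 := by rw [heq]; rfl
    have f2 : q.2.2 = q.1.2 + d.2 := by rw [heq]; rfl
    show 2*d.1*q.2.1 + 2*d.2*q.2.2 = c + 2*(d.1^2+d.2^2)
    linear_combination 2*d.1*f1 + 2*d.2*f2 + hline
  have hfin : S.Finite := Set.Finite.of_finite_image (fin1.subset himg1) hinj1
  refine ⟨hfin, ?_⟩
  rcases le_total R₁ R₂ with hmin | hmin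
  · rw [min_eq_left hmin]
    calc (S.ncard : ℝ) = ((Prod.fst '' S).ncard : ℝ) := by rw [Set.ncard_image_of_injOn hinj1]
      _ ≤ _ := by exact_mod_cast Set.ncard_le_ncard himg1 fin1
      _ ≤ 7 * R₁ := card1
  · rw [min_eq_right hmin]
    calc (S.ncard : ℝ) = ((Prod.snd '' S).ncard : ℝ) := by rw [Set.ncard_image_of_injOn hinj2]
      _ ≤ _ := by exact_mod_cast Set.ncard_le_ncard himg2 fin2
      _ ≤ 7 * R₂ := card2

lemma row_bound {N N₁ N₂ N₃ : ℝ} (h2 : 1 ≤ N₂) (h3 : 1 ≤ N₃) (m : ℤ) (p : (ℤ×ℤ)×(ℤ×ℤ)) :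
    {q : (ℤ×ℤ)×(ℤ×ℤ) | SMem N N₁ N₂ N₃ m p.1 p.2 q.1 q.2}.Finite ∧
    (({q : (ℤ×ℤ)×(ℤ×ℤ) | SMem N N₁ N₂ N₃ m p.1 p.2 q.1 q.2}).ncard : ℝ) ≤ 7 * min N₂ N₃ := by
  set S := {q : (ℤ×ℤ)×(ℤ×ℤ) | SMem N N₁ N₂ N₃ m p.1 p.2 q.1 q.2} with hSdef
  rcases Set.eq_empty_or_nonempty S with he | ⟨q₀, hq₀⟩
  · rw [he]
    refine ⟨Set.finite_empty, ?_⟩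
    simp only [Set.ncard_empty, Nat.cast_zero]
    have : (1:ℝ) ≤ min N₂ N₃ := le_min h2 h3
    linarith
  · set d : ℤ × ℤ := p.1 - p.2 with hd
    have hdne : d ≠ 0 := by
      have := hq₀.2.1
      simpa [hd, sub_eq_zero] using this
    apply pair_line_count d hdne (nsq p.1 - nsq p.2 - nsq d - m) N₂ N₃ h2 h3
    intro q hq
    obtain ⟨heq, hnn, _, hphi, _, _, hs2, hs3⟩ := hq
    have hq2 : q.2 = q.1 + d := by
      rw [hd]; rw [heq] at *; abel
    refine ⟨hq2, ?_, simDyadic_le hs2, simDyadic_le hs3⟩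
    have f1 : q.2.1 = q.1.1 + d.1 := by rw [hq2]; rfl
    have f2 : q.2.2 = q.1.2 + d.2 := by rw [hq2]; rfl
    have hd1 : d.1 = p.1.1 - p.2.1 := by rw [hd]; rfl
    have hd2 : d.2 = p.1.2 - p.2.2 := by rw [hd]; rfl
    simp only [phiFn, nsq] at hphi ⊢
    simp only [hd1, hd2] at f1 f2 ⊢
    linear_combination -hphi - (q.2.1 + q.1.1 + (p.1.1 - p.2.1)) * f1 - (q.2.2 + q.1.2 + (p.1.2 - p.2.2)) * f2

lemma col_bound {N N₁ N₂ N₃ : ℝ} (h0 : 1 ≤ N) (h1 : 1 ≤ N₁) (m : ℤ) (q : (ℤ×ℤ)×(ℤ×ℤ)) :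
    {p : (ℤ×ℤ)×(ℤ×ℤ) | SMem N N₁ N₂ N₃ m p.1 p.2 q.1 q.2}.Finite ∧
    (({p : (ℤ×ℤ)×(ℤ×ℤ) | SMem N N₁ N₂ N₃ m p.1 p.2 q.1 q.2}).ncard : ℝ) ≤ 7 * min N N₁ := by
  set S := {p : (ℤ×ℤ)×(ℤ×ℤ) | SMem N N₁ N₂ N₃ m p.1 p.2 q.1 q.2} with hSdef
  rcases Set.eq_empty_or_nonempty S with he | ⟨p₀, hp₀⟩
  · rw [he]
    refine ⟨Set.finite_empty, ?_⟩
    simp only [Set.ncard_empty, Nat.cast_zero]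
    have : (1:ℝ) ≤ min N N₁ := le_min h0 h1
    linarith
  · set d : ℤ × ℤ := q.1 - q.2 with hd
    have hdne : d ≠ 0 := by
      have heq := hp₀.1
      have hne := hp₀.2.1
      intro h
      apply hne
      have : q.1 = q.2 := by rwa [hd, sub_eq_zero] at h
      rw [heq, this]; abel
    apply pair_line_count d hdne (nsq q.1 - nsq q.2 - nsq d - m) N N₁ h0 h1
    intro p hp
    obtain ⟨heq, hnn, _, hphi, hs0, hs1, _, _⟩ := hp
    have hp2 : p.2 = p.1 + d := by
      rw [hd, heq]; abel
    refine ⟨hp2, ?_, simDyadic_le hs0, simDyadic_le hs1⟩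
    have f1 : p.2.1 = p.1.1 + d.1 := by rw [hp2]; rfl
    have f2 : p.2.2 = p.1.2 + d.2 := by rw [hp2]; rfl
    have hd1 : d.1 = q.1.1 - q.2.1 := by rw [hd]; rfl
    have hd2 : d.2 = q.1.2 - q.2.2 := by rw [hd]; rfl
    simp only [phiFn, nsq] at hphi ⊢
    simp only [hd1, hd2] at f1 f2 ⊢
    linear_combination -hphi - (p.2.1 + p.1.1 + (q.1.1 - q.2.1)) * f1 - (p.2.2 + p.1.2 + (q.1.2 - q.2.2)) * f2


theorem stmt15 :
    ∃ C : ℝ, 0 < C ∧ ∀ N N₁ N₂ N₃ : ℝ,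
      IsDyadic N → IsDyadic N₁ → IsDyadic N₂ → IsDyadic N₃ → ∀ m : ℤ,
      ∀ f : (ℤ × ℤ) × (ℤ × ℤ) → ℝ, Summable (fun q => f q ^ 2) →
        Real.sqrt (∑' p : (ℤ × ℤ) × (ℤ × ℤ),
            (∑' q : (ℤ × ℤ) × (ℤ × ℤ), hten N N₁ N₂ N₃ m p.1 p.2 q.1 q.2 * f q) ^ 2) ≤
          C * (min N N₁) ^ ((1 : ℝ) / 2) * (min N₂ N₃) ^ ((1 : ℝ) / 2) *
            Real.sqrt (∑' q : (ℤ × ℤ) × (ℤ × ℤ), f q ^ 2) := by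
  classical
  refine ⟨7, by norm_num, ?_⟩
  intro N N₁ N₂ N₃ hN hN₁ hN₂ hN₃ m f hf
  have h0 := dyadic_one_le hN
  have h1 := dyadic_one_le hN₁
  have h2 := dyadic_one_le hN₂
  have h3 := dyadic_one_le hN₃
  set A : ℝ := 7 * min N₂ N₃ with hA
  set B : ℝ := 7 * min N N₁ with hB
  have hminA : (1:ℝ) ≤ min N₂ N₃ := le_min h2 h3
  have hminB : (1:ℝ) ≤ min N N₁ := le_min h0 h1
  have hA0 : 0 < A := by rw [hA]; nlinarith
  have hB0 : 0 < B := by rw [hB]; nlinarith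
  have hrow := fun p => row_bound (N := N) (N₁ := N₁) h2 h3 m p
  have hcol := fun q => col_bound (N₂ := N₂) (N₃ := N₃) h0 h1 m q
  set sp : (ℤ×ℤ)×(ℤ×ℤ) → Finset ((ℤ×ℤ)×(ℤ×ℤ)) := fun p => (hrow p).1.toFinset with hsp
  set tq : (ℤ×ℤ)×(ℤ×ℤ) → Finset ((ℤ×ℤ)×(ℤ×ℤ)) := fun q => (hcol q).1.toFinset with htq
  have hsp_mem : ∀ p q, q ∈ sp p ↔ SMem N N₁ N₂ N₃ m p.1 p.2 q.1 q.2 := by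
    intro p q; rw [hsp]; exact Set.Finite.mem_toFinset _
  have htq_mem : ∀ q p, p ∈ tq q ↔ SMem N N₁ N₂ N₃ m p.1 p.2 q.1 q.2 := by
    intro q p; rw [htq]; exact Set.Finite.mem_toFinset _
  -- inner sum is a finite sum
  have hinner : ∀ p, (∑' q, hten N N₁ N₂ N₃ m p.1 p.2 q.1 q.2 * f q) = ∑ q ∈ sp p, f q := by
    intro p
    rw [tsum_eq_sum (s := sp p) (fun q hq => by
      have hns : ¬ SMem N N₁ N₂ N₃ m p.1 p.2 q.1 q.2 := fun h => hq ((hsp_mem p q).2 h)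
      simp [hten, hns])]
    refine Finset.sum_congr rfl fun q hq => ?_
    have hs : SMem N N₁ N₂ N₃ m p.1 p.2 q.1 q.2 := (hsp_mem p q).1 hq
    simp [hten, hs]
  set w : (ℤ×ℤ)×(ℤ×ℤ) → ℝ := fun p => ∑ q ∈ sp p, f q ^ 2 with hw
  have hw0 : ∀ p, 0 ≤ w p := fun p => Finset.sum_nonneg fun _ _ => sq_nonneg _
  -- Cauchy-Schwarz on each row
  have hCS : ∀ p, (∑ q ∈ sp p, f q) ^ 2 ≤ A * w p := by
    intro p
    have hcs : (∑ q ∈ sp p, f q) ^ 2 ≤ (sp p).card * ∑ q ∈ sp p, f q ^ 2 :=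
      sq_sum_le_card_mul_sum_sq
    have hcard : ((sp p).card : ℝ) ≤ A := by
      have hb := (hrow p).2
      rwa [Set.ncard_eq_toFinset_card _ (hrow p).1] at hb
    exact le_trans hcs (mul_le_mul_of_nonneg_right hcard (hw0 p))
  -- ENNReal bookkeeping
  set T : ℝ := ∑' q, f q ^ 2 with hT
  have hT0 : 0 ≤ T := tsum_nonneg fun q => sq_nonneg _
  set g : (ℤ×ℤ)×(ℤ×ℤ) → ℝ≥0∞ := fun q => ENNReal.ofReal (f q ^ 2) with hg
  set k : (ℤ×ℤ)×(ℤ×ℤ) → (ℤ×ℤ)×(ℤ×ℤ) → ℝ≥0∞ := fun p q =>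
    if SMem N N₁ N₂ N₃ m p.1 p.2 q.1 q.2 then g q else 0 with hk
  have hk1 : ∀ p, (∑' q, k p q) = ENNReal.ofReal (w p) := by
    intro p
    rw [tsum_eq_sum (s := sp p) (fun q hq => by
      have hns : ¬ SMem N N₁ N₂ N₃ m p.1 p.2 q.1 q.2 := fun h => hq ((hsp_mem p q).2 h)
      simp [hk, hns])]
    rw [hw, ENNReal.ofReal_sum_of_nonneg (fun q _ => sq_nonneg (f q))]
    refine Finset.sum_congr rfl fun q hq => ?_
    have hs : SMem N N₁ N₂ N₃ m p.1 p.2 q.1 q.2 := (hsp_mem p q).1 hq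
    simp [hk, hs, hg]
  have hk2 : ∀ q, (∑' p, k p q) ≤ ENNReal.ofReal B * g q := by
    intro q
    rw [tsum_eq_sum (s := tq q) (fun p hp => by
      have hns : ¬ SMem N N₁ N₂ N₃ m p.1 p.2 q.1 q.2 := fun h => hp ((htq_mem q p).2 h)
      simp [hk, hns])]
    have hconst : ∀ p ∈ tq q, k p q = g q := by
      intro p hp
      have hs : SMem N N₁ N₂ N₃ m p.1 p.2 q.1 q.2 := (htq_mem q p).1 hp
      simp [hk, hs]
    rw [Finset.sum_congr rfl hconst, Finset.sum_const, nsmul_eq_mul]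
    have hcard : ((tq q).card : ℝ≥0∞) ≤ ENNReal.ofReal B := by
      have hb := (hcol q).2
      rw [Set.ncard_eq_toFinset_card _ (hcol q).1] at hb
      calc ((tq q).card : ℝ≥0∞) = ENNReal.ofReal ((tq q).card : ℝ) := by
            rw [ENNReal.ofReal_natCast]
        _ ≤ ENNReal.ofReal B := ENNReal.ofReal_le_ofReal hb
    exact mul_le_mul_left hcard (g q)
  have hgsum : (∑' q, g q) = ENNReal.ofReal T := by
    rw [hT, ENNReal.ofReal_tsum_of_nonneg (fun q => sq_nonneg (f q)) hf]
  have htot : (∑' p, ENNReal.ofReal (w p)) ≤ ENNReal.ofReal (B * T) := by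
    calc (∑' p, ENNReal.ofReal (w p)) = ∑' p, ∑' q, k p q := by
          refine tsum_congr fun p => (hk1 p).symm
      _ = ∑' q, ∑' p, k p q := ENNReal.tsum_comm
      _ ≤ ∑' q, ENNReal.ofReal B * g q := ENNReal.tsum_le_tsum hk2
      _ = ENNReal.ofReal B * ∑' q, g q := ENNReal.tsum_mul_left
      _ = ENNReal.ofReal B * ENNReal.ofReal T := by rw [hgsum]
      _ = ENNReal.ofReal (B * T) := (ENNReal.ofReal_mul hB0.le).symm
  have hne : (∑' p, ENNReal.ofReal (w p)) ≠ ⊤ :=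
    (lt_of_le_of_lt htot ENNReal.ofReal_lt_top).ne
  have hsumw : Summable w := by
    have hs := ENNReal.summable_toReal hne
    exact hs.congr fun p => ENNReal.toReal_ofReal (hw0 p)
  have hsumw' : (∑' p, w p) ≤ B * T := by
    have heq := ENNReal.ofReal_tsum_of_nonneg hw0 hsumw
    rw [← heq] at htot
    exact (ENNReal.ofReal_le_ofReal_iff (by nlinarith)).1 htot
  have hpt : ∀ p : (ℤ×ℤ)×(ℤ×ℤ), (∑' q, hten N N₁ N₂ N₃ m p.1 p.2 q.1 q.2 * f q) ^ 2 ≤ A * w p := by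
    intro p; rw [hinner p]; exact hCS p
  have hsumAw : Summable (fun p => A * w p) := hsumw.mul_left A
  have hsum2 : Summable (fun p : (ℤ×ℤ)×(ℤ×ℤ) => (∑' q, hten N N₁ N₂ N₃ m p.1 p.2 q.1 q.2 * f q) ^ 2) :=
    Summable.of_nonneg_of_le (fun p => sq_nonneg _) hpt hsumAw
  have hfinal : (∑' p : (ℤ×ℤ)×(ℤ×ℤ), (∑' q, hten N N₁ N₂ N₃ m p.1 p.2 q.1 q.2 * f q) ^ 2) ≤ A * (B * T) := by
    calc (∑' p : (ℤ×ℤ)×(ℤ×ℤ), (∑' q, hten N N₁ N₂ N₃ m p.1 p.2 q.1 q.2 * f q) ^ 2)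
        ≤ ∑' p, A * w p := Summable.tsum_le_tsum hpt hsum2 hsumAw
      _ = A * ∑' p, w p := tsum_mul_left
      _ ≤ A * (B * T) := mul_le_mul_of_nonneg_left hsumw' hA0.le
  have hs1 : Real.sqrt (min N N₁) ^ 2 = min N N₁ := Real.sq_sqrt (by linarith)
  have hs2 : Real.sqrt (min N₂ N₃) ^ 2 = min N₂ N₃ := Real.sq_sqrt (by linarith)
  have hs3 : Real.sqrt T ^ 2 = T := Real.sq_sqrt hT0
  have hsqrtval : Real.sqrt (A * (B * T))
      = 7 * Real.sqrt (min N N₁) * Real.sqrt (min N₂ N₃) * Real.sqrt T := by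
    have e : A * (B * T)
        = (7 * Real.sqrt (min N N₁) * Real.sqrt (min N₂ N₃) * Real.sqrt T) ^ 2 := by
      rw [hA, hB]
      linear_combination (-49 * Real.sqrt (min N₂ N₃) ^ 2 * Real.sqrt T ^ 2) * hs1
        - (49 * min N N₁ * Real.sqrt T ^ 2) * hs2 - (49 * min N N₁ * min N₂ N₃) * hs3
    rw [e, Real.sqrt_sq (by positivity)]
  calc Real.sqrt (∑' p : (ℤ×ℤ)×(ℤ×ℤ), (∑' q, hten N N₁ N₂ N₃ m p.1 p.2 q.1 q.2 * f q) ^ 2)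
      ≤ Real.sqrt (A * (B * T)) := Real.sqrt_le_sqrt hfinal
    _ = 7 * Real.sqrt (min N N₁) * Real.sqrt (min N₂ N₃) * Real.sqrt T := hsqrtval
    _ = 7 * (min N N₁) ^ ((1:ℝ)/2) * (min N₂ N₃) ^ ((1:ℝ)/2) * Real.sqrt T := by
        rw [Real.sqrt_eq_rpow, Real.sqrt_eq_rpow (min N₂ N₃)]
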